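/- Let X be a process on Ω with time set T (ℕ or [0,∞)) and values in (E, ℰ), and S a stopping time of the natural filtration F^X. If the range of the stopped process satisfies Im X^S ⊆ Im X (as subsets of E^T), then F^X_S ⊆ σ(X^S). -/

import Mathlib

open MeasureTheory Set

variable {Ω E T : Type*}

/-- The natural filtration of a process `X : T → Ω → E`. -/
def natFilt [LinearOrder T] [mE : MeasurableSpace E] (X : T → Ω → E) (t : T) :
    MeasurableSpace Ω :=
  ⨆ s, ⨆ _ : s ≤ t, mE.comap (X s)

/-- The process `X` stopped at the random time `S : Ω → T ∪ {∞}`. -/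
def stopped [LinearOrder T] (X : T → Ω → E) (S : Ω → WithTop T) (t : T) (ω : Ω) : E :=
  X (min t ((S ω).untopD t)) ω

/-
Galmarino's test. If the path of `ω'` is the path of `ω` stopped at `S ω`, the two paths agree
up to time `S ω`; since every `{S ≤ t}` lies in `F^X_t`, this forces `S ω' = S ω`, and the two
paths then also agree up to `S ω'`. A set `A ∈ F^X_S` is determined by the path up to time `S`
(through `A ∩ {S ≤ s} ∈ F^X_s`, or through `A ∈ F^X_∞` when `S ω = ∞`), so `ω' ∈ A ↔ ω ∈ A`.
As `A ∈ F^X_∞` is of the form `X⁻¹ B`, the range hypothesis lets every `ω` be replaced by such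
an `ω'`, which gives `A = (X^S)⁻¹ B`.
-/

lemma mem_iff_of_measurableSet_comap {β : Type*} [m : MeasurableSpace β] {f : Ω → β}
    {A : Set Ω} (hA : MeasurableSet[m.comap f] A) {ω ω' : Ω} (h : f ω = f ω') :
    ω ∈ A ↔ ω' ∈ A := by
  obtain ⟨B, -, rfl⟩ := hA
  simp only [mem_preimage, h]

section NaturalFiltration

variable [LinearOrder T] [MeasurableSpace E]

lemma natFilt_le_comap_restrict (X : T → Ω → E) (t : T) :
    natFilt X t ≤ MeasurableSpace.comap (fun ω (s : Iic t) => X s ω) MeasurableSpace.pi := by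
  refine iSup₂_le fun s hs => ?_
  rw [show X s = (fun p : Iic t → E => p ⟨s, hs⟩) ∘ fun ω (u : Iic t) => X u ω from rfl,
    ← MeasurableSpace.comap_comp]
  exact MeasurableSpace.comap_mono (measurable_pi_apply _).comap_le

lemma iSup_natFilt_le_comap (X : T → Ω → E) :
    (⨆ t, natFilt X t) ≤ MeasurableSpace.comap (fun ω t => X t ω) MeasurableSpace.pi := by
  refine iSup_le fun t => iSup₂_le fun s _ => ?_
  rw [show X s = (fun p : T → E => p s) ∘ fun ω t => X t ω from rfl,
    ← MeasurableSpace.comap_comp]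
  exact MeasurableSpace.comap_mono (measurable_pi_apply _).comap_le

lemma mem_iff_of_measurableSet_natFilt {X : T → Ω → E} {t : T} {A : Set Ω}
    (hA : MeasurableSet[natFilt X t] A) {ω ω' : Ω} (h : ∀ s ≤ t, X s ω = X s ω') :
    ω ∈ A ↔ ω' ∈ A :=
  mem_iff_of_measurableSet_comap (natFilt_le_comap_restrict X t A hA)
    (funext fun s => h s s.2)

end NaturalFiltration

lemma stopped_eq_of_coe_le [LinearOrder T] (X : T → Ω → E) (S : Ω → WithTop T) {t : T}
    {ω : Ω} (ht : (t : WithTop T) ≤ S ω) : stopped X S t ω = X t ω := by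
  unfold stopped
  congr
  cases hSω : S ω with
  | top => simp
  | coe s => simpa [hSω] using ht

-- Unlike `WithTop.eq_of_forall_le_coe_iff`, this needs no `NoTopOrder α`: the time set may have a greatest element.
lemma WithTop.eq_of_forall_le_coe_iff' {α : Type*} [PartialOrder α] {a b : WithTop α}
    (h : ∀ t : α, a ≤ t ↔ b ≤ t) : a = b := by
  refine le_antisymm ?_ ?_
  · cases b with
    | top => exact le_top
    | coe t => exact (h t).mpr le_rfl
  · cases a with
    | top => exact le_top
    | coe t => exact (h t).mp le_rfl

section StoppingTime

variable [LinearOrder T] [MeasurableSpace E] {X : T → Ω → E} {S : Ω → WithTop T}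

lemma stoppingTime_eq_of_path_eq_stopped
    (hS : ∀ t : T, MeasurableSet[natFilt X t] {ω | S ω ≤ (t : WithTop T)}) {ω ω' : Ω}
    (hX : ∀ t, X t ω' = stopped X S t ω) : S ω' = S ω := by
  have hagree (u : T) (hu : (u : WithTop T) ≤ S ω) : X u ω' = X u ω :=
    (hX u).trans (stopped_eq_of_coe_le X S hu)
  refine WithTop.eq_of_forall_le_coe_iff' fun t => ?_
  rcases le_or_gt (S ω) t with hSt | htS
  · obtain ⟨s, hSs, hst⟩ := WithTop.le_coe_iff.mp hSt
    have hω' : S ω' ≤ s := (mem_iff_of_measurableSet_natFilt (hS s)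
      fun u hu => hagree u (hSs ▸ WithTop.coe_le_coe.mpr hu)).mpr hSs.le
    exact iff_of_true (hω'.trans (WithTop.coe_le_coe.mpr hst)) hSt
  · refine (mem_iff_of_measurableSet_natFilt (hS t) fun u hu => ?_).trans
      (iff_of_false (not_le.mpr htS) (not_le.mpr htS))
    exact hagree u ((WithTop.coe_le_coe.mpr hu).trans htS.le)

lemma mem_iff_of_path_eq_stopped
    (hS : ∀ t : T, MeasurableSet[natFilt X t] {ω | S ω ≤ (t : WithTop T)}) {A : Set Ω}
    (hA : MeasurableSet[⨆ t, natFilt X t] A)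
    (hAS : ∀ t : T, MeasurableSet[natFilt X t] (A ∩ {ω | S ω ≤ (t : WithTop T)}))
    {ω ω' : Ω} (hX : ∀ t, X t ω' = stopped X S t ω) : ω' ∈ A ↔ ω ∈ A := by
  have hagree (u : T) (hu : (u : WithTop T) ≤ S ω) : X u ω' = X u ω :=
    (hX u).trans (stopped_eq_of_coe_le X S hu)
  cases hSω : S ω with
  | top =>
    exact mem_iff_of_measurableSet_comap (iSup_natFilt_le_comap X A hA)
      (funext fun u => hagree u (hSω ▸ le_top))
  | coe s =>
    have hSω' : S ω' = s := hSω ▸ stoppingTime_eq_of_path_eq_stopped hS hX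
    have hs := mem_iff_of_measurableSet_natFilt (hAS s)
      fun u hu => hagree u (hSω ▸ WithTop.coe_le_coe.mpr hu)
    simpa [hSω, hSω'] using hs

end StoppingTime

theorem stmt_3_general [LinearOrder T] [MeasurableSpace E]
    (X : T → Ω → E) (S : Ω → WithTop T)
    (hS : ∀ t : T, MeasurableSet[natFilt X t] {ω | S ω ≤ (t : WithTop T)})
    (hIm : Set.range (fun ω (t : T) => stopped X S t ω) ⊆ Set.range (fun ω (t : T) => X t ω)) :
    ∀ A : Set Ω,
      (MeasurableSet[⨆ t, natFilt X t] A ∧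
          ∀ t : T, MeasurableSet[natFilt X t] (A ∩ {ω | S ω ≤ (t : WithTop T)})) →
        MeasurableSet[MeasurableSpace.comap (fun ω (t : T) => stopped X S t ω)
          MeasurableSpace.pi] A := by
  rintro A ⟨hA, hAS⟩
  obtain ⟨B, hB, hAB⟩ := iSup_natFilt_le_comap X A hA
  refine ⟨B, hB, ext fun ω => ?_⟩
  obtain ⟨ω', hω'⟩ := hIm ⟨ω, rfl⟩
  beta_reduce at hω'
  calc ω ∈ (fun ω t => stopped X S t ω) ⁻¹' B ↔ ω' ∈ (fun ω t => X t ω) ⁻¹' B := by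
        rw [mem_preimage, mem_preimage, hω']
    _ ↔ ω ∈ A := by
        rw [hAB]
        exact mem_iff_of_path_eq_stopped hS hA hAS fun t => congrFun hω' t

/-- If `X` is a process with time set `T` (`ℕ` or `[0,∞)`), `S` a stopping time of its
natural filtration, and the range of the stopped process is contained in the range of the
process (as maps `Ω → E^T`), then `F^X_S ⊆ σ(X^S)`. -/
theorem stmt_3 [LinearOrder T] [MeasurableSpace E]
    (hT : Nonempty (T ≃o ℕ) ∨ Nonempty (T ≃o NNReal))
    (X : T → Ω → E) (S : Ω → WithTop T)
    (hS : ∀ t : T, MeasurableSet[natFilt X t] {ω | S ω ≤ (t : WithTop T)})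
    (hIm : Set.range (fun ω (t : T) => stopped X S t ω) ⊆ Set.range (fun ω (t : T) => X t ω)) :
    ∀ A : Set Ω,
      (MeasurableSet[⨆ t, natFilt X t] A ∧
          ∀ t : T, MeasurableSet[natFilt X t] (A ∩ {ω | S ω ≤ (t : WithTop T)})) →
        MeasurableSet[MeasurableSpace.comap (fun ω (t : T) => stopped X S t ω)
          MeasurableSpace.pi] A :=
  stmt_3_general X S hS hIm
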